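/- On the singular set {|α|² = |β|²}, the inner products of first and second derivatives of f = AA* satisfy: ⟨f',f'⟩ = αβ, ⟨f',f_z̄⟩ = |α|², ⟨f_z̄,f_z̄⟩ = ᾱβ̄, ⟨f',f''⟩ = (1/2)(α'β + αβ'), ⟨f',f'_z̄⟩ = 0, ⟨f',f_z̄z̄⟩ = (1/2)(α·conj(α') + β·conj(β')), ⟨f_z̄,f''⟩ = (1/2)(α'ᾱ + β'β̄), ⟨f_z̄,f'_z̄⟩ = 0, ⟨f_z̄,f_z̄z̄⟩ = (1/2)·conj(α'β + αβ'). -/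
import Mathlib


open Matrix Complex ComplexConjugate

noncomputable def e2 : Matrix (Fin 2) (Fin 2) ℂ := !![0, Complex.I; -Complex.I, 0]

/-- The complex-bilinear extension of the Lorentzian inner product
`⟨X,Y⟩ = -(1/2)·trace(X e₂ Y e₂)` on Hermitian matrices; the complex-bilinear
extension is `-(1/2)·trace(X e₂ ᵗY e₂)` (for Hermitian `Y`, `ᵗY = Y̅`). -/
noncomputable def ip (X Y : Matrix (Fin 2) (Fin 2) ℂ) : ℂ :=
  -(1/2 : ℂ) * (X * e2 * Yᵀ * e2).trace

/-- A matrix of determinant one preserves `e2` in the sense `Mᵀ e₂ M = e₂`. -/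
lemma e2_conj (M : Matrix (Fin 2) (Fin 2) ℂ) (hM : M.det = 1) :
    Mᵀ * e2 * M = e2 := by
  rw [Matrix.det_fin_two] at hM
  ext i j
  fin_cases i <;> fin_cases j
  · simp [e2, Matrix.mul_apply, Fin.sum_univ_two]; ring
  · simp [e2, Matrix.mul_apply, Fin.sum_univ_two]; linear_combination Complex.I * hM
  · simp [e2, Matrix.mul_apply, Fin.sum_univ_two]; linear_combination -Complex.I * hM
  · simp [e2, Matrix.mul_apply, Fin.sum_univ_two]; ring

/-- `ip` is invariant under the action `X ↦ A X Aᴴ` for `det A = 1`. -/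
lemma ip_conj (A X Y : Matrix (Fin 2) (Fin 2) ℂ) (hA : A.det = 1) :
    ip (A * X * Aᴴ) (A * Y * Aᴴ) = ip X Y := by
  have h1 : Aᵀ * (e2 * A) = e2 := by rw [← mul_assoc]; exact e2_conj A hA
  have h2 : Aᴴ * (e2 * Aᴴᵀ) = e2 := by
    rw [← mul_assoc]
    simpa [Matrix.transpose_transpose] using e2_conj Aᴴᵀ (by simp [hA])
  unfold ip
  congr 1
  rw [Matrix.transpose_mul, Matrix.transpose_mul]
  simp only [mul_assoc]
  rw [Matrix.trace_mul_comm A]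
  simp only [mul_assoc]
  rw [← mul_assoc e2 Aᴴᵀ, ← mul_assoc Aᴴ (e2 * Aᴴᵀ), h2, h1]

/-- Explicit entrywise formula for `ip` on `2 × 2` matrices. -/
lemma ip_eval (X Y : Matrix (Fin 2) (Fin 2) ℂ) :
    ip X Y = -(1/2) * (X 0 0 * Y 1 1 + X 1 1 * Y 0 0 - X 0 1 * Y 1 0 - X 1 0 * Y 0 1) := by
  simp [ip, e2, Matrix.trace_fin_two, Matrix.mul_apply, Fin.sum_univ_two]
  linear_combination (X 0 1 * Y 1 0 - X 0 0 * Y 1 1 - X 1 1 * Y 0 0 + X 1 0 * Y 0 1) * Complex.I_sq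

/-- On the singular set `{|α|² = |β|²}` of `f = AAᴴ` (`det A = 1`), the inner
products of first and second derivatives of `f` are as listed; here `a, b, da,
db` denote the values of `α, β, α', β'` at the point, and `f' = ADAᴴ`,
`f_z̄ = ADᴴAᴴ`, `f'' = A[[ab,da],[db,ab]]Aᴴ`, `f'_z̄ = A·diag(|a|²,|b|²)·Aᴴ`,
`f_z̄z̄ = A[[āb̄, conj db],[conj da, āb̄]]Aᴴ`. -/
theorem inner_products_of_derivatives (A : Matrix (Fin 2) (Fin 2) ℂ)
    (hA : A.det = 1) (a b da db : ℂ) (hsing : a * conj a = b * conj b) :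
    ip (A * !![0, a; b, 0] * Aᴴ) (A * !![0, a; b, 0] * Aᴴ) = a * b ∧
    ip (A * !![0, a; b, 0] * Aᴴ) (A * (!![0, a; b, 0])ᴴ * Aᴴ) = a * conj a ∧
    ip (A * (!![0, a; b, 0])ᴴ * Aᴴ) (A * (!![0, a; b, 0])ᴴ * Aᴴ)
      = conj a * conj b ∧
    ip (A * !![0, a; b, 0] * Aᴴ) (A * !![a * b, da; db, a * b] * Aᴴ)
      = (1/2) * (da * b + a * db) ∧
    ip (A * !![0, a; b, 0] * Aᴴ) (A * !![a * conj a, 0; 0, b * conj b] * Aᴴ)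
      = 0 ∧
    ip (A * !![0, a; b, 0] * Aᴴ)
        (A * !![conj a * conj b, conj db; conj da, conj a * conj b] * Aᴴ)
      = (1/2) * (a * conj da + b * conj db) ∧
    ip (A * (!![0, a; b, 0])ᴴ * Aᴴ) (A * !![a * b, da; db, a * b] * Aᴴ)
      = (1/2) * (da * conj a + db * conj b) ∧
    ip (A * (!![0, a; b, 0])ᴴ * Aᴴ)
        (A * !![a * conj a, 0; 0, b * conj b] * Aᴴ) = 0 ∧
    ip (A * (!![0, a; b, 0])ᴴ * Aᴴ)
        (A * !![conj a * conj b, conj db; conj da, conj a * conj b] * Aᴴ)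
      = (1/2) * conj (da * b + a * db) := by
  refine ⟨?_, ?_, ?_, ?_, ?_, ?_, ?_, ?_, ?_⟩ <;>
    rw [ip_conj _ _ _ hA, ip_eval] <;>
    simp [Matrix.conjTranspose_apply, _root_.map_mul] <;>
    (first | ring1 | linear_combination (1/2 : ℂ) * hsing | linear_combination (-1/2 : ℂ) * hsing)
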